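/- arXiv:1007.5478 — 4 statements merged into one kernel-verified Lean document; each statement's English description precedes it below -/
import Mathlib

section
/- For r ∈ (0,1), the integral ∫₁^∞ (√r · √(x²−1)) / (√(1−r²) · √x · (x²−r²)) dx converges and equals √π (√r/√(1−r²)) (Γ(5/4)/Γ(7/4)) ₂F₁(1/4,1,7/4;r²). -/
/-!
Expanding `1 / (x² - s) = ∑ sⁿ x⁻²ⁿ⁻²` turns the integral into a power series in `s` whose
coefficients are Beta integrals: the substitution `y = x⁻²` gives
`∫₁^∞ √(x² - 1) x^(-2a-2) dx = B(a, 3/2) / 2`. Since `B(a + n, 3/2) = B(a, 3/2) (a)ₙ / (a + 3/2)ₙ`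
and `(1)ₙ = n!`, the series is `B(a, 3/2) / 2 · ₂F₁(a, 1, a + 3/2; s)`; the theorem is the case
`a = 1/4`, `s = r²`, with `B(1/4, 3/2) / 2 = √π Γ(5/4) / Γ(7/4)`.
-/

open MeasureTheory

/-- The Gauss hypergeometric function `₂F₁(a, b, c; x)`. -/
noncomputable def hyp2F1 (a b c x : ℝ) : ℝ :=
  ∑' n : ℕ, ((ascPochhammer ℝ n).eval a * (ascPochhammer ℝ n).eval b /
      (ascPochhammer ℝ n).eval c) * x ^ n / (n.factorial : ℝ)

open Set Real ProbabilityTheory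

theorem integral_Ioc_rpow_mul_one_sub_rpow_eq_beta {a b : ℝ} (ha : 0 < a) (hb : 0 < b) :
    ∫ y in Ioc 0 1, y ^ (a - 1) * (1 - y) ^ (b - 1) = beta a b := by
  have hB := Complex.betaIntegral_eq_Gamma_mul_div (u := a) (v := b) (by simpa) (by simpa)
  rw [Complex.betaIntegral, intervalIntegral.integral_of_le zero_le_one] at hB
  rw [beta, ← Complex.ofReal_inj, ← integral_complex_ofReal, Complex.ofReal_div,
    Complex.ofReal_mul, ← Complex.Gamma_ofReal, ← Complex.Gamma_ofReal, ← Complex.Gamma_ofReal,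
    Complex.ofReal_add, ← hB]
  refine setIntegral_congr_fun measurableSet_Ioc fun y hy => ?_
  rw [Complex.ofReal_mul, Complex.ofReal_cpow hy.1.le, Complex.ofReal_cpow (sub_nonneg.2 hy.2)]
  push_cast
  rfl

theorem Real.Gamma_add_nat_eq_mul_ascPochhammer {x : ℝ} (hx : 0 < x) (n : ℕ) :
    Gamma (x + n) = Gamma x * (ascPochhammer ℝ n).eval x := by
  induction n with
  | zero => simp
  | succ n ih =>
    rw [Nat.cast_succ, ← add_assoc, Gamma_add_one (by positivity), ih, ascPochhammer_succ_eval]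
    ring

theorem ascPochhammer_eval_le_of_le {x y : ℝ} (hx : 0 < x) (hxy : x ≤ y) (n : ℕ) :
    (ascPochhammer ℝ n).eval x ≤ (ascPochhammer ℝ n).eval y := by
  induction n with
  | zero => simp
  | succ n ih =>
    simp only [ascPochhammer_succ_eval]
    exact mul_le_mul ih (by linarith) (by positivity) (ascPochhammer_pos n y (hx.trans_le hxy)).le

theorem ProbabilityTheory.beta_add_nat {a b : ℝ} (ha : 0 < a) (hb : 0 < b) (n : ℕ) :
    beta (a + n) b =
      beta a b * ((ascPochhammer ℝ n).eval a / (ascPochhammer ℝ n).eval (a + b)) := by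
  have hab : 0 < a + b := by positivity
  have := Gamma_pos_of_pos hab
  have := ascPochhammer_pos n _ hab
  rw [beta, beta, add_right_comm, Gamma_add_nat_eq_mul_ascPochhammer ha,
    Gamma_add_nat_eq_mul_ascPochhammer hab]
  field_simp

theorem hyp2F1_one_right (a c z : ℝ) :
    hyp2F1 a 1 c z =
      ∑' n : ℕ, (ascPochhammer ℝ n).eval a / (ascPochhammer ℝ n).eval c * z ^ n := by
  refine tsum_congr fun n => ?_
  have : (n.factorial : ℝ) ≠ 0 := by positivity
  rw [ascPochhammer_eval_one]
  field_simp

theorem sqrt_one_sub_rpow_neg_two {x : ℝ} (hx : 0 < x) :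
    √(1 - x ^ (-2 : ℝ)) = √(x ^ 2 - 1) * x⁻¹ := by
  rw [rpow_neg hx.le, rpow_two, ← sqrt_sq (inv_nonneg.2 hx.le), ← sqrt_mul' _ (sq_nonneg _)]
  congr 1
  field_simp

theorem integral_Ioi_one_sqrt_sq_sub_one_mul_rpow {a : ℝ} (ha : 0 < a) :
    ∫ x in Ioi 1, √(x ^ 2 - 1) * x ^ (-2 * a - 2) = beta a (3 / 2) / 2 := by
  have hsubst := integral_comp_rpow_Ioi (fun y => y ^ (a - 1) * √(1 - y)) (p := -2) (by norm_num)
  -- `√(1 - y)` vanishes for `y ≥ 1`: this cuts the `y`-integral down to `(0, 1]` and the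
  -- `x`-integral down to `(1, ∞)`.
  have hbeta : ∫ y in Ioi 0, y ^ (a - 1) * √(1 - y) = beta a (3 / 2) := by
    rw [setIntegral_eq_of_subset_of_forall_sdiff_eq_zero measurableSet_Ioi
      (Ioc_subset_Ioi_self : Ioc (0 : ℝ) 1 ⊆ _),
      ← integral_Ioc_rpow_mul_one_sub_rpow_eq_beta ha (by norm_num : (0 : ℝ) < 3 / 2)]
    · norm_num [sqrt_eq_rpow]
    · rintro y ⟨hy0 : 0 < y, hy1⟩
      rw [sqrt_eq_zero'.2 (by grind), mul_zero]
  have hlhs : ∫ x in Ioi 0, (|(-2 : ℝ)| * x ^ ((-2 : ℝ) - 1)) •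
        ((x ^ (-2 : ℝ)) ^ (a - 1) * √(1 - x ^ (-2 : ℝ))) =
      ∫ x in Ioi 1, 2 * (√(x ^ 2 - 1) * x ^ (-2 * a - 2)) := by
    rw [setIntegral_eq_of_subset_of_forall_sdiff_eq_zero measurableSet_Ioi
      (Ioi_subset_Ioi zero_le_one)]
    · refine setIntegral_congr_fun measurableSet_Ioi fun x (hx : 1 < x) => ?_
      have hx0 : 0 < x := one_pos.trans hx
      have hpow : x ^ ((-2 : ℝ) - 1) * x ^ (-2 * (a - 1)) * x ^ (-1 : ℝ) = x ^ (-2 * a - 2) := by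
        rw [← rpow_add hx0, ← rpow_add hx0]
        ring_nf
      rw [smul_eq_mul, sqrt_one_sub_rpow_neg_two hx0, ← rpow_mul hx0.le, ← rpow_neg_one x, ← hpow,
        abs_neg, abs_two]
      ring
    · rintro x ⟨hx0 : 0 < x, hx1 : ¬1 < x⟩
      have : 1 ≤ x ^ (-2 : ℝ) :=
        one_le_rpow_of_pos_of_le_one_of_nonpos hx0 (not_lt.1 hx1) (by norm_num)
      rw [sqrt_eq_zero'.2 (by linarith), mul_zero, smul_zero]
  rw [hlhs, hbeta, integral_const_mul] at hsubst
  linarith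

theorem integrableOn_Ioi_one_sqrt_sq_sub_one_mul_rpow {a : ℝ} (ha : 0 < a) :
    IntegrableOn (fun x => √(x ^ 2 - 1) * x ^ (-2 * a - 2)) (Ioi 1) :=
  Integrable.of_integral_ne_zero <| by
    rw [integral_Ioi_one_sqrt_sq_sub_one_mul_rpow ha]
    exact (half_pos (beta_pos ha (by norm_num))).ne'

theorem hasSum_pow_mul_rpow_neg_two_mul_add {a s x : ℝ} (hx : 0 < x) (hs : |s| < x ^ 2) :
    HasSum (fun n : ℕ => s ^ n * x ^ (-2 * (a + n) - 2)) (x ^ (-2 * a) / (x ^ 2 - s)) := by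
  have hq : ‖s / x ^ 2‖ < 1 := by
    rwa [norm_div, norm_pow, Real.norm_eq_abs, Real.norm_eq_abs, abs_of_pos hx,
      div_lt_one (by positivity)]
  have hsx : x ^ 2 - s ≠ 0 := by linarith [le_abs_self s]
  have hsum := (hasSum_geometric_of_norm_lt_one hq).mul_left (x ^ (-2 * a) / x ^ 2)
  rw [show x ^ (-2 * a) / x ^ 2 * (1 - s / x ^ 2)⁻¹ = x ^ (-2 * a) / (x ^ 2 - s) by
    field_simp] at hsum
  refine hsum.congr_fun fun n => ?_
  rw [show -2 * (a + n) - 2 = -2 * a - ((2 * n : ℕ) + 2 : ℝ) by push_cast; ring, rpow_sub hx,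
    rpow_add hx, rpow_natCast, rpow_two, pow_mul, div_pow]
  field_simp

section

variable {a s : ℝ}

theorem integrableOn_Ioi_one_sqrt_sq_sub_one_mul_rpow_div (ha : 0 < a) (hs : |s| < 1) :
    IntegrableOn (fun x => √(x ^ 2 - 1) * x ^ (-2 * a) / (x ^ 2 - s)) (Ioi 1) := by
  refine ((integrableOn_Ioi_one_sqrt_sq_sub_one_mul_rpow ha).const_mul (1 - |s|)⁻¹).mono'
    (by fun_prop : Measurable _).aestronglyMeasurable
    ((ae_restrict_iff' measurableSet_Ioi).2 (ae_of_all _ fun x (hx : 1 < x) => ?_))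
  have hx0 : 0 < x := one_pos.trans hx
  have hs1 : 0 < 1 - |s| := by linarith
  have hx2 : 1 ≤ x ^ 2 := by nlinarith
  have hden : x ^ 2 * (1 - |s|) ≤ x ^ 2 - s := by
    nlinarith [le_abs_self s, mul_le_mul_of_nonneg_left hx2 (abs_nonneg s)]
  have hpos : 0 < x ^ 2 - s := (by positivity : 0 < x ^ 2 * (1 - |s|)).trans_le hden
  have hnum : 0 ≤ √(x ^ 2 - 1) * x ^ (-2 * a) := by positivity
  rw [norm_of_nonneg (div_nonneg hnum hpos.le), rpow_sub hx0, rpow_two, ← mul_div_assoc,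
    inv_mul_eq_div, div_div]
  exact div_le_div_of_nonneg_left hnum (by positivity) hden

theorem integral_Ioi_one_sqrt_sq_sub_one_mul_rpow_div (ha : 0 < a) (hs : |s| < 1) :
    ∫ x in Ioi 1, √(x ^ 2 - 1) * x ^ (-2 * a) / (x ^ 2 - s) =
      beta a (3 / 2) / 2 * hyp2F1 a 1 (a + 3 / 2) s := by
  set c : ℕ → ℝ := fun n => (ascPochhammer ℝ n).eval a / (ascPochhammer ℝ n).eval (a + 3 / 2)
  set f : ℕ → ℝ → ℝ := fun n x => s ^ n * (√(x ^ 2 - 1) * x ^ (-2 * (a + n) - 2))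
  have hf_int (n : ℕ) : IntegrableOn (f n) (Ioi 1) :=
    (integrableOn_Ioi_one_sqrt_sq_sub_one_mul_rpow (by positivity)).const_mul _
  have hf_integral (t : ℝ) (n : ℕ) :
      ∫ x in Ioi 1, t ^ n * (√(x ^ 2 - 1) * x ^ (-2 * (a + n) - 2)) =
        beta a (3 / 2) / 2 * (c n * t ^ n) := by
    rw [integral_const_mul, integral_Ioi_one_sqrt_sq_sub_one_mul_rpow (by positivity),
      beta_add_nat ha (by norm_num)]
    ring
  have hf_norm (n : ℕ) : ∫ x in Ioi 1, ‖f n x‖ = beta a (3 / 2) / 2 * (c n * |s| ^ n) := by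
    rw [← hf_integral]
    refine setIntegral_congr_fun measurableSet_Ioi fun x (hx : 1 < x) => ?_
    rw [norm_mul, norm_pow, Real.norm_eq_abs, Real.norm_eq_abs,
      abs_of_nonneg (mul_nonneg (sqrt_nonneg _) (rpow_nonneg (one_pos.trans hx).le _))]
  have hc (n : ℕ) : 0 ≤ c n ∧ c n ≤ 1 := by
    have hpos := ascPochhammer_pos n (a + 3 / 2) (by positivity)
    exact ⟨div_nonneg (ascPochhammer_pos n a ha).le hpos.le,
      div_le_one_of_le₀ (ascPochhammer_eval_le_of_le ha (by linarith) n) hpos.le⟩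
  have hsummable : Summable fun n => ∫ x in Ioi 1, ‖f n x‖ := by
    simp_rw [hf_norm]
    have := beta_pos ha (by norm_num : (0 : ℝ) < 3 / 2)
    refine Summable.of_nonneg_of_le (fun n => ?_) (fun n => ?_)
      ((summable_geometric_of_lt_one (abs_nonneg s) hs).mul_left (beta a (3 / 2) / 2))
    · have := (hc n).1
      positivity
    · gcongr
      exact mul_le_of_le_one_left (by positivity) (hc n).2
  have hF : ∫ x in Ioi 1, ∑' n, f n x = ∫ x in Ioi 1, √(x ^ 2 - 1) * x ^ (-2 * a) / (x ^ 2 - s) :=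
    setIntegral_congr_fun measurableSet_Ioi fun x (hx : 1 < x) => by
      have hsx := hasSum_pow_mul_rpow_neg_two_mul_add (a := a) (one_pos.trans hx)
        (hs.trans (one_lt_pow₀ hx two_ne_zero))
      rw [mul_div_assoc, ← (hsx.mul_left √(x ^ 2 - 1)).tsum_eq]
      exact tsum_congr fun n => mul_left_comm _ _ _
  rw [← hF, ← (hasSum_integral_of_summable_integral_norm hf_int hsummable).tsum_eq,
    hyp2F1_one_right, ← tsum_mul_left]
  exact tsum_congr fun n => hf_integral s n

end

theorem half_beta_one_fourth_three_halves :
    beta (1 / 4) (3 / 2) / 2 = √π * (Gamma (5 / 4) / Gamma (7 / 4)) := by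
  have h32 : Gamma (3 / 2) = √π / 2 := by
    rw [show (3 / 2 : ℝ) = 1 / 2 + 1 by norm_num, Gamma_add_one (by norm_num), Gamma_one_half_eq]
    ring
  have h54 : Gamma (5 / 4) = Gamma (1 / 4) / 4 := by
    rw [show (5 / 4 : ℝ) = 1 / 4 + 1 by norm_num, Gamma_add_one (by norm_num)]
    ring
  rw [beta, h32, h54, show (1 / 4 + 3 / 2 : ℝ) = 7 / 4 by norm_num]
  ring

/-- For `r ∈ (0,1)`, `∫₁^∞ (√r √(x²−1))/(√(1−r²) √x (x²−r²)) dx` converges and equals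
`√π (√r/√(1−r²)) (Γ(5/4)/Γ(7/4)) ₂F₁(1/4,1,7/4;r²)`. -/
theorem stmt4 (r : ℝ) (hr : r ∈ Set.Ioo (0 : ℝ) 1) :
    IntegrableOn
        (fun x : ℝ => Real.sqrt r * Real.sqrt (x ^ 2 - 1) /
          (Real.sqrt (1 - r ^ 2) * Real.sqrt x * (x ^ 2 - r ^ 2))) (Set.Ioi 1) ∧
      ∫ x in Set.Ioi (1 : ℝ), Real.sqrt r * Real.sqrt (x ^ 2 - 1) /
          (Real.sqrt (1 - r ^ 2) * Real.sqrt x * (x ^ 2 - r ^ 2)) =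
        Real.sqrt Real.pi * (Real.sqrt r / Real.sqrt (1 - r ^ 2)) *
          (Real.Gamma (5 / 4) / Real.Gamma (7 / 4)) * hyp2F1 (1 / 4) 1 (7 / 4) (r ^ 2) := by
  obtain ⟨hr0, hr1⟩ := hr
  have hs : |r ^ 2| < 1 := by
    rw [abs_of_nonneg (sq_nonneg r)]
    nlinarith
  have hintegrand : EqOn
      (fun x => √r * √(x ^ 2 - 1) / (√(1 - r ^ 2) * √x * (x ^ 2 - r ^ 2)))
      (fun x => √r / √(1 - r ^ 2) * (√(x ^ 2 - 1) * x ^ (-2 * (1 / 4 : ℝ)) / (x ^ 2 - r ^ 2)))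
      (Ioi 1) := fun x (hx : 1 < x) => by
    dsimp only
    rw [show -2 * (1 / 4 : ℝ) = -(1 / 2) by norm_num, rpow_neg (by linarith), ← sqrt_eq_rpow]
    simp only [div_eq_mul_inv, mul_inv]
    ring
  refine ⟨IntegrableOn.congr_fun
    ((integrableOn_Ioi_one_sqrt_sq_sub_one_mul_rpow_div (a := 1 / 4) (by norm_num) hs).const_mul _)
    hintegrand.symm measurableSet_Ioi, ?_⟩
  rw [setIntegral_congr_fun measurableSet_Ioi hintegrand, integral_const_mul,
    integral_Ioi_one_sqrt_sq_sub_one_mul_rpow_div (by norm_num) hs,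
    show (1 / 4 + 3 / 2 : ℝ) = 7 / 4 by norm_num, half_beta_one_fourth_three_halves]
  ring
end

section
/- As ε → 0⁺, if x₄ − x₃ = x₃ − x₂ > 0 with x₂, x₃, x₄ bounded away from 0 and ∞, and ε = ∫_{x₃}^{x₄} (1/t)·√((t−x₃)/((t−x₂)(t−x₄))) dt (principal-value/absolute-value interpretation of the square root so the integrand is real positive), then x₄ − x₃ is comparable to ε² : there exist constants 0 < c < C with c ε² ≤ x₄ − x₃ ≤ C ε². -/
/-!
Write `h = x₄ - x₃`, so that `x₂ = x₃ - h`. Since `t - x₃ ≤ t - x₂`, the integrand is at most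
`(1 / K₁) (x₄ - t)^(-1/2)`, whose integral is `2 √h / K₁`; hence `ε ≲ √h`. Conversely, on the
upper half `((x₃ + x₄) / 2, x₄)` of the interval the square root is at least `1 / (2 √h)` and
`1 / t ≥ 1 / K₂`, so `ε ≥ √h / (4 K₂)`.
-/

open Real Set MeasureTheory intervalIntegral

noncomputable def ellipticIntegrand (x₂ x₃ x₄ t : ℝ) : ℝ :=
  1 / t * √((t - x₃) / |(t - x₂) * (t - x₄)|)

theorem intervalIntegrable_sub_rpow_neg_half (a b : ℝ) :
    IntervalIntegrable (fun t => (b - t) ^ (-(1 / 2) : ℝ)) volume a b := by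
  simpa using ((intervalIntegrable_rpow' (a := b - a) (b := b - b)
    (by norm_num : (-1 : ℝ) < -(1 / 2))).comp_sub_left b)

theorem integral_sub_rpow_neg_half (a b : ℝ) :
    ∫ t in a..b, (b - t) ^ (-(1 / 2) : ℝ) = 2 * √(b - a) := by
  rw [integral_comp_sub_left (fun u => u ^ (-(1 / 2) : ℝ)), sub_self,
    integral_rpow (Or.inl (by norm_num)), zero_rpow (by norm_num), sqrt_eq_rpow]
  ring_nf

theorem sqrt_div_abs_mul_le_rpow {x₂ x₃ x₄ t : ℝ} (hx : x₂ ≤ x₃) (ht : t ∈ Icc x₃ x₄) :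
    √((t - x₃) / |(t - x₂) * (t - x₄)|) ≤ (x₄ - t) ^ (-(1 / 2) : ℝ) := by
  obtain ⟨ht₃, ht₄⟩ := ht
  have habs : |(t - x₂) * (t - x₄)| = (t - x₂) * (x₄ - t) := by
    rw [abs_mul, abs_of_nonneg (by linarith), abs_of_nonpos (by linarith), neg_sub]
  have hratio : (t - x₃) / (t - x₂) / (x₄ - t) ≤ (x₄ - t)⁻¹ :=
    (div_le_div_of_nonneg_right (div_le_one_of_le₀ (by linarith) (by linarith))
      (by linarith)).trans_eq (one_div _)
  rw [habs, ← div_div, rpow_neg (by linarith), ← sqrt_eq_rpow, ← sqrt_inv]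
  exact sqrt_le_sqrt hratio

theorem inv_two_sqrt_le_sqrt_div_abs_mul {x₂ x₃ x₄ t : ℝ} (hsym : x₄ - x₃ = x₃ - x₂)
    (ht : t ∈ Ioo ((x₃ + x₄) / 2) x₄) :
    1 / (2 * √(x₄ - x₃)) ≤ √((t - x₃) / |(t - x₂) * (t - x₄)|) := by
  obtain ⟨ht₃, ht₄⟩ := ht
  have hh : 0 < x₄ - x₃ := by linarith
  have habs : |(t - x₂) * (t - x₄)| = (t - x₂) * (x₄ - t) := by
    rw [abs_mul, abs_of_nonneg (by linarith), abs_of_nonpos (by linarith), neg_sub]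
  have hden : 0 < (t - x₂) * (x₄ - t) := mul_pos (by linarith) (by linarith)
  rw [habs, le_sqrt (by positivity) (div_nonneg (by linarith) hden.le), div_pow, mul_pow,
    sq_sqrt hh.le, div_le_div_iff₀ (by positivity) hden]
  nlinarith

theorem ellipticIntegrand_nonneg (x₂ x₃ x₄ : ℝ) {t : ℝ} (ht : 0 ≤ t) :
    0 ≤ ellipticIntegrand x₂ x₃ x₄ t :=
  mul_nonneg (one_div_nonneg.2 ht) (sqrt_nonneg _)

theorem ellipticIntegrand_le {K x₂ x₃ x₄ t : ℝ} (hK : 0 < K) (hKx : K ≤ x₃) (hx : x₂ ≤ x₃)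
    (ht : t ∈ Icc x₃ x₄) : ellipticIntegrand x₂ x₃ x₄ t ≤ 1 / K * (x₄ - t) ^ (-(1 / 2) : ℝ) :=
  mul_le_mul (one_div_le_one_div_of_le hK (hKx.trans ht.1)) (sqrt_div_abs_mul_le_rpow hx ht)
    (sqrt_nonneg _) (by positivity)

theorem intervalIntegrable_ellipticIntegrand {x₂ x₃ x₄ : ℝ} (h₃ : 0 < x₃) (hx : x₂ ≤ x₃)
    (h₃₄ : x₃ ≤ x₄) : IntervalIntegrable (ellipticIntegrand x₂ x₃ x₄) volume x₃ x₄ := by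
  refine ((intervalIntegrable_sub_rpow_neg_half x₃ x₄).const_mul (1 / x₃)).mono_fun'
    (by unfold ellipticIntegrand; fun_prop) ?_
  rw [uIoc_of_le h₃₄]
  filter_upwards [ae_restrict_mem measurableSet_Ioc] with t ht
  rw [Real.norm_of_nonneg (ellipticIntegrand_nonneg _ _ _ (by linarith [ht.1]))]
  exact ellipticIntegrand_le h₃ le_rfl hx (Ioc_subset_Icc_self ht)

theorem integral_ellipticIntegrand_le {K x₂ x₃ x₄ : ℝ} (hK : 0 < K) (hKx : K ≤ x₃)
    (hx : x₂ ≤ x₃) (h₃₄ : x₃ ≤ x₄) :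
    ∫ t in x₃..x₄, ellipticIntegrand x₂ x₃ x₄ t ≤ 2 * √(x₄ - x₃) / K := calc
  _ ≤ ∫ t in x₃..x₄, 1 / K * (x₄ - t) ^ (-(1 / 2) : ℝ) :=
      integral_mono_on h₃₄ (intervalIntegrable_ellipticIntegrand (hK.trans_le hKx) hx h₃₄)
        ((intervalIntegrable_sub_rpow_neg_half x₃ x₄).const_mul _)
        fun t ht => ellipticIntegrand_le hK hKx hx ht
  _ = 2 * √(x₄ - x₃) / K := by
      rw [intervalIntegral.integral_const_mul, integral_sub_rpow_neg_half]; ring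

theorem sqrt_div_le_integral_ellipticIntegrand {K x₂ x₃ x₄ : ℝ} (h₃ : 0 < x₃) (hxK : x₄ ≤ K)
    (hsym : x₄ - x₃ = x₃ - x₂) (h₃₄ : x₃ ≤ x₄) :
    √(x₄ - x₃) / (4 * K) ≤ ∫ t in x₃..x₄, ellipticIntegrand x₂ x₃ x₄ t := by
  have hK : 0 < K := by linarith
  have hint := intervalIntegrable_ellipticIntegrand (x₂ := x₂) h₃ (by linarith) h₃₄
  calc √(x₄ - x₃) / (4 * K)
      = ∫ _ in (x₃ + x₄) / 2..x₄, 1 / K * (1 / (2 * √(x₄ - x₃))) := by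
        rcases h₃₄.eq_or_lt with h | h
        · simp [h]
        have hs : 0 < √(x₄ - x₃) := sqrt_pos.2 (by linarith)
        rw [intervalIntegral.integral_const, smul_eq_mul]
        field_simp
        nlinarith [sq_sqrt (by linarith : (0 : ℝ) ≤ x₄ - x₃)]
    _ ≤ ∫ t in (x₃ + x₄) / 2..x₄, ellipticIntegrand x₂ x₃ x₄ t :=
        integral_mono_on_of_le_Ioo (by linarith) intervalIntegrable_const
          (hint.mono_set (uIcc_subset_uIcc (by rw [uIcc_of_le h₃₄]; constructor <;> linarith)
            right_mem_uIcc)) fun t ht =>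
          mul_le_mul (one_div_le_one_div_of_le (by linarith [ht.1]) (by linarith [ht.2]))
            (inv_two_sqrt_le_sqrt_div_abs_mul hsym ht) (by positivity)
            (one_div_nonneg.2 (by linarith [ht.1]))
    _ ≤ ∫ t in x₃..x₄, ellipticIntegrand x₂ x₃ x₄ t := by
        refine integral_mono_interval (by linarith) (by linarith) le_rfl ?_ hint
        filter_upwards [ae_restrict_mem measurableSet_Ioc] with t ht
        exact ellipticIntegrand_nonneg _ _ _ (by linarith [ht.1])

/-- If `x₂ < x₃ < x₄` are symmetric (`x₄ − x₃ = x₃ − x₂ > 0`), lie in a fixed compact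
subinterval `[K₁, K₂]` of `(0,∞)`, and
`ε = ∫_{x₃}^{x₄} (1/t)·√((t−x₃)/|(t−x₂)(t−x₄)|) dt`, then for small `ε > 0` the quantity
`x₄ − x₃` is comparable to `ε²`: there are constants `0 < c`, `0 < C` with
`c ε² ≤ x₄ − x₃ ≤ C ε²`. -/
theorem stmt9 (K₁ K₂ : ℝ) (hK₁ : 0 < K₁) (hK : K₁ ≤ K₂) :
    ∃ c C ε₀ : ℝ, 0 < c ∧ 0 < C ∧ 0 < ε₀ ∧
      ∀ x₂ x₃ x₄ ε : ℝ,
        x₂ ∈ Set.Icc K₁ K₂ → x₃ ∈ Set.Icc K₁ K₂ → x₄ ∈ Set.Icc K₁ K₂ →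
        x₄ - x₃ = x₃ - x₂ → 0 < x₄ - x₃ → 0 < ε → ε < ε₀ →
        ε = ∫ t in x₃..x₄, (1 / t) * Real.sqrt ((t - x₃) / |(t - x₂) * (t - x₄)|) →
        c * ε ^ 2 ≤ x₄ - x₃ ∧ x₄ - x₃ ≤ C * ε ^ 2 := by
  have hK₂ : 0 < K₂ := hK₁.trans_le hK
  refine ⟨K₁ ^ 2 / 4, 16 * K₂ ^ 2, 1, by positivity, by positivity, one_pos, ?_⟩
  intro x₂ x₃ x₄ ε _ ⟨hx₃, _⟩ ⟨_, hx₄⟩ hsym hh hε₀ _ hε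
  change ε = ∫ t in x₃..x₄, ellipticIntegrand x₂ x₃ x₄ t at hε
  have hupper : ε ≤ 2 * √(x₄ - x₃) / K₁ :=
    hε ▸ integral_ellipticIntegrand_le hK₁ hx₃ (by linarith) (by linarith)
  have hlower : √(x₄ - x₃) / (4 * K₂) ≤ ε :=
    hε ▸ sqrt_div_le_integral_ellipticIntegrand (hK₁.trans_le hx₃) hx₄ hsym (by linarith)
  have hsq := sq_sqrt hh.le
  constructor
  · rw [le_div_iff₀ hK₁] at hupper
    nlinarith [mul_pos hε₀ hK₁]
  · have : √(x₄ - x₃) ≤ 4 * K₂ * ε := by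
      rwa [div_le_iff₀ (by positivity), mul_comm] at hlower
    nlinarith [sqrt_nonneg (x₄ - x₃)]
end

section
/- As ε → 0⁺, if y₄ − y₃ = y₃ − y₂ > 0 with y₂, y₃, y₄ in a fixed compact subinterval of (0,∞), and ε = ∫_{y₃}^{y₄} (1/t)·√(|(t−y₂)(t−y₄)|/(t−y₃)) dt, then y₄ − y₃ is comparable to ε^{2/3}: there exist constants 0 < c < C with c ε^{2/3} ≤ y₄ − y₃ ≤ C ε^{2/3}. -/
open MeasureTheory intervalIntegral Set

/-- If `y₂ < y₃ < y₄` are symmetric (`y₄ − y₃ = y₃ − y₂ > 0`), lie in a fixed compact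
subinterval `[K₁, K₂]` of `(0,∞)`, and
`ε = ∫_{y₃}^{y₄} (1/t)·√(|(t−y₂)(t−y₄)|/(t−y₃)) dt`, then for small `ε > 0` the quantity
`y₄ − y₃` is comparable to `ε^{2/3}`: there are constants `0 < c`, `0 < C` with
`c ε^{2/3} ≤ y₄ − y₃ ≤ C ε^{2/3}`. -/
theorem stmt10 (K₁ K₂ : ℝ) (hK₁ : 0 < K₁) (hK : K₁ ≤ K₂) :
    ∃ c C ε₀ : ℝ, 0 < c ∧ 0 < C ∧ 0 < ε₀ ∧
      ∀ y₂ y₃ y₄ ε : ℝ,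
        y₂ ∈ Set.Icc K₁ K₂ → y₃ ∈ Set.Icc K₁ K₂ → y₄ ∈ Set.Icc K₁ K₂ →
        y₄ - y₃ = y₃ - y₂ → 0 < y₄ - y₃ → 0 < ε → ε < ε₀ →
        ε = ∫ t in y₃..y₄, (1 / t) * Real.sqrt (|(t - y₂) * (t - y₄)| / (t - y₃)) →
        c * ε ^ ((2 : ℝ) / 3) ≤ y₄ - y₃ ∧ y₄ - y₃ ≤ C * ε ^ ((2 : ℝ) / 3) := by
  have hK₂ : 0 < K₂ := hK₁.trans_le hK
  set B : ℝ := 2 * Real.sqrt 2 / K₁ with hBdef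
  have hB : 0 < B := by positivity
  have hBpow : 0 < B ^ ((2:ℝ)/3) := Real.rpow_pos_of_pos hB _
  set A : ℝ := (4 * K₂)⁻¹ with hAdef
  have hA : 0 < A := by positivity
  have hApow : 0 < A ^ ((2:ℝ)/3) := Real.rpow_pos_of_pos hA _
  refine ⟨(B ^ ((2:ℝ)/3))⁻¹, (A ^ ((2:ℝ)/3))⁻¹, 1, by positivity, by positivity, one_pos,
    fun y₂ y₃ y₄ ε hy2 hy3 hy4 hsym hδ hε _ hint => ?_⟩
  set δ : ℝ := y₄ - y₃ with hδdef
  set f : ℝ → ℝ := fun t => (1 / t) * Real.sqrt (|(t - y₂) * (t - y₄)| / (t - y₃)) with hfdef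
  set g : ℝ → ℝ := fun t => Real.sqrt 2 * δ / K₁ * (t - y₃) ^ (-(1/2) : ℝ) with hgdef
  have h34 : y₃ < y₄ := by linarith
  have hy3pos : 0 < y₃ := hK₁.trans_le hy3.1
  -- pointwise upper bound on the closed interval
  have hfg : ∀ t ∈ Set.Icc y₃ y₄, f t ≤ g t := by
    intro t ht
    rcases eq_or_lt_of_le ht.1 with rfl | ht3
    · simp [hfdef, hgdef, Real.zero_rpow (by norm_num : (-(1/2):ℝ) ≠ 0)]
    · have htpos : 0 < t := hy3pos.trans ht3
      have h1 : (1:ℝ) / t ≤ 1 / K₁ :=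
        one_div_le_one_div_of_le hK₁ (hy3.1.trans ht3.le)
      have habs : |(t - y₂) * (t - y₄)| ≤ 2 * δ ^ 2 := by
        rw [abs_mul, abs_of_nonneg (by linarith [ht.1] : (0:ℝ) ≤ t - y₂),
          abs_of_nonpos (by linarith [ht.2] : t - y₄ ≤ 0)]
        nlinarith [ht.2, ht.1]
      have h2 : Real.sqrt (|(t - y₂) * (t - y₄)| / (t - y₃)) ≤
          Real.sqrt 2 * δ * (t - y₃) ^ (-(1/2) : ℝ) := by
        have hinv : (Real.sqrt (t - y₃))⁻¹ = (t - y₃) ^ (-(1/2) : ℝ) := by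
          rw [Real.rpow_neg (by linarith : (0:ℝ) ≤ t - y₃), ← Real.sqrt_eq_rpow]
        have hs : Real.sqrt (2 * δ ^ 2 / (t - y₃)) =
            Real.sqrt 2 * δ * (t - y₃) ^ (-(1/2) : ℝ) := by
          rw [div_eq_mul_inv, Real.sqrt_mul (by positivity), Real.sqrt_mul (by norm_num),
            Real.sqrt_sq hδ.le, Real.sqrt_inv, hinv]
        rw [← hs]
        exact Real.sqrt_le_sqrt (div_le_div_of_nonneg_right habs (by linarith)) |>.trans_eq rfl
      calc f t ≤ (1 / K₁) * (Real.sqrt 2 * δ * (t - y₃) ^ (-(1/2) : ℝ)) :=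
            mul_le_mul h1 h2 (Real.sqrt_nonneg _) (by positivity)
        _ = g t := by simp [hgdef]; ring
  -- integrability of the dominating function and of f
  have hgint : IntervalIntegrable g volume y₃ y₄ := by
    have h0 : IntervalIntegrable (fun x : ℝ => (x - y₃) ^ (-(1/2) : ℝ)) volume y₃ y₄ := by
      have := (intervalIntegrable_rpow' (a := 0) (b := δ)
        (by norm_num : (-1:ℝ) < -(1/2))).comp_sub_right y₃
      simpa [hδdef] using this
    exact h0.const_mul _
  have hfnonneg : ∀ t ∈ Set.Ioc y₃ y₄, 0 ≤ f t := by
    intro t ht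
    exact mul_nonneg (one_div_nonneg.mpr (hy3pos.trans ht.1).le) (Real.sqrt_nonneg _)
  have hfmeas : AEStronglyMeasurable f (volume.restrict (Set.uIoc y₃ y₄)) := by
    apply Measurable.aestronglyMeasurable
    fun_prop
  have hfint : IntervalIntegrable f volume y₃ y₄ := by
    apply hgint.mono_fun' hfmeas
    rw [Set.uIoc_of_le h34.le]
    filter_upwards [ae_restrict_mem measurableSet_Ioc] with x hx
    rw [Real.norm_eq_abs, abs_of_nonneg (hfnonneg x hx)]
    exact hfg x (Set.Ioc_subset_Icc_self hx)
  -- the value of ∫ g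
  have hrint : (∫ t in y₃..y₄, (t - y₃) ^ (-(1/2) : ℝ)) = 2 * δ ^ ((1:ℝ)/2) := by
    rw [intervalIntegral.integral_comp_sub_right (fun x => x ^ (-(1/2) : ℝ)) y₃, sub_self]
    rw [integral_rpow (Or.inl (by norm_num : (-1:ℝ) < -(1/2)))]
    rw [show (-(1/2) : ℝ) + 1 = 1/2 by norm_num, Real.zero_rpow (by norm_num : (1/2:ℝ) ≠ 0)]
    rw [← hδdef]
    ring
  have hd32 : δ ^ ((3:ℝ)/2) = δ * δ ^ ((1:ℝ)/2) := by
    rw [show (3:ℝ)/2 = 1 + 1/2 by norm_num, Real.rpow_add hδ, Real.rpow_one]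
  -- upper bound for ε
  have hub : ε ≤ B * δ ^ ((3:ℝ)/2) := by
    have h1 : ε ≤ ∫ t in y₃..y₄, g t := by
      rw [hint]
      exact intervalIntegral.integral_mono_on h34.le hfint hgint hfg
    have h2 : (∫ t in y₃..y₄, g t) = B * δ ^ ((3:ℝ)/2) := by
      rw [hgdef]
      rw [intervalIntegral.integral_const_mul, hrint, hd32, hBdef]
      ring
    linarith
  -- lower bound for ε
  have hlb : A * δ ^ ((3:ℝ)/2) ≤ ε := by
    have hsub1 : y₃ ≤ y₃ + δ / 4 := by linarith
    have hsub2 : y₃ + δ / 4 ≤ y₃ + δ / 2 := by linarith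
    have hsub3 : y₃ + δ / 2 ≤ y₄ := by
      have : y₄ = y₃ + δ := by rw [hδdef]; ring
      linarith
    have hptwise : ∀ t ∈ Set.Icc (y₃ + δ / 4) (y₃ + δ / 2),
        Real.sqrt δ / K₂ ≤ f t := by
      intro t ht
      have ht3 : y₃ < t := by linarith [ht.1]
      have htpos : 0 < t := hy3pos.trans ht3
      have htK2 : t ≤ K₂ := le_trans (by linarith [ht.2] : t ≤ y₄) hy4.2
      have h1 : (1:ℝ) / K₂ ≤ 1 / t := one_div_le_one_div_of_le htpos htK2
      have habs : |(t - y₂) * (t - y₄)| = (t - y₂) * (y₄ - t) := by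
        rw [abs_mul, abs_of_nonneg (by linarith : (0:ℝ) ≤ t - y₂),
          abs_of_nonpos (by linarith [ht.2] : t - y₄ ≤ 0)]
        ring
      have h2 : δ ≤ |(t - y₂) * (t - y₄)| / (t - y₃) := by
        rw [habs, le_div_iff₀ (by linarith : (0:ℝ) < t - y₃)]
        nlinarith [ht.1, ht.2]
      have h3 : Real.sqrt δ ≤ Real.sqrt (|(t - y₂) * (t - y₄)| / (t - y₃)) :=
        Real.sqrt_le_sqrt h2
      calc Real.sqrt δ / K₂ = (1 / K₂) * Real.sqrt δ := by ring
        _ ≤ (1 / t) * Real.sqrt (|(t - y₂) * (t - y₄)| / (t - y₃)) :=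
            mul_le_mul h1 h3 (Real.sqrt_nonneg _) (by positivity)
        _ = f t := rfl
    have hfint' : IntervalIntegrable f volume (y₃ + δ / 4) (y₃ + δ / 2) := by
      apply hfint.mono_set'
      rw [Set.uIoc_of_le h34.le, Set.uIoc_of_le hsub2]
      exact Set.Ioc_subset_Ioc (by linarith) (by linarith)
    have h1 : (∫ _ in (y₃ + δ / 4)..(y₃ + δ / 2), Real.sqrt δ / K₂) ≤
        ∫ t in (y₃ + δ / 4)..(y₃ + δ / 2), f t :=
      intervalIntegral.integral_mono_on hsub2 intervalIntegrable_const hfint' hptwise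
    have h2 : (∫ t in (y₃ + δ / 4)..(y₃ + δ / 2), f t) ≤ ∫ t in y₃..y₄, f t := by
      apply intervalIntegral.integral_mono_interval hsub1 hsub2 hsub3 _ hfint
      filter_upwards [ae_restrict_mem measurableSet_Ioc] with x hx using hfnonneg x hx
    have h3 : (∫ _ in (y₃ + δ / 4)..(y₃ + δ / 2), Real.sqrt δ / K₂) =
        (δ / 4) * (Real.sqrt δ / K₂) := by
      rw [intervalIntegral.integral_const, smul_eq_mul]
      ring_nf
    have h4 : A * δ ^ ((3:ℝ)/2) = (δ / 4) * (Real.sqrt δ / K₂) := by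
      rw [hd32, hAdef, Real.sqrt_eq_rpow]
      field_simp
    rw [hint, h4]
    linarith
  constructor
  · -- lower: c ε^{2/3} ≤ δ
    have h1 : ε ^ ((2:ℝ)/3) ≤ B ^ ((2:ℝ)/3) * δ := by
      calc ε ^ ((2:ℝ)/3) ≤ (B * δ ^ ((3:ℝ)/2)) ^ ((2:ℝ)/3) :=
            Real.rpow_le_rpow hε.le hub (by norm_num)
        _ = B ^ ((2:ℝ)/3) * (δ ^ ((3:ℝ)/2)) ^ ((2:ℝ)/3) :=
            Real.mul_rpow hB.le (Real.rpow_nonneg hδ.le _)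
        _ = B ^ ((2:ℝ)/3) * δ := by
            rw [← Real.rpow_mul hδ.le]
            norm_num
    rw [inv_mul_le_iff₀ hBpow]
    exact h1
  · -- upper: δ ≤ C ε^{2/3}
    have h1 : A ^ ((2:ℝ)/3) * δ ≤ ε ^ ((2:ℝ)/3) := by
      calc A ^ ((2:ℝ)/3) * δ = (A * δ ^ ((3:ℝ)/2)) ^ ((2:ℝ)/3) := by
            rw [Real.mul_rpow hA.le (Real.rpow_nonneg hδ.le _), ← Real.rpow_mul hδ.le]
            norm_num
        _ ≤ ε ^ ((2:ℝ)/3) := Real.rpow_le_rpow (by positivity) hlb (by norm_num)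
    calc δ = (A ^ ((2:ℝ)/3))⁻¹ * (A ^ ((2:ℝ)/3) * δ) := by
          field_simp
      _ ≤ (A ^ ((2:ℝ)/3))⁻¹ * ε ^ ((2:ℝ)/3) :=
          mul_le_mul_of_nonneg_left h1 (by positivity)
end

section
/- Suppose F₁(ε) + (1/π) log ε and F₂(ε') − (1/π) log ε' are both real analytic functions of their arguments near 0 (in particular single-valued), that ε'(ε) is real analytic and single-valued in ε with ε'(ε) comparable to ε near ε = 0, and that F₁(ε) = F₂(ε'(ε)) for ε in a sequence tending to 0 along which both ε and ε' tend to 0. Then a contradiction follows: under these hypotheses log(ε · ε'(ε)) would be single-valued and bounded analytic near ε = 0, contradicting ε ε'(ε) → 0. -/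
/-!
Multiplying the identity `F₁(ε) = F₂(ε'(ε))` by `π` gives
`log ε + log ε'(ε) = π (f₁(ε) − f₂(ε'(ε)))`. Comparability forces `ε'(ε) → 0⁺` with `ε`, so the
right-hand side converges to `π (f₁ 0 − f₂ 0)` along the sequence while the left-hand side
tends to `−∞`.
-/

open Filter Topology Real

theorem tendsto_nhdsGT_zero_of_comparable {g : ℝ → ℝ} {c C ε₀ : ℝ} (hc : 0 < c) (hε₀ : 0 < ε₀)
    (hcomp : ∀ ε ∈ Set.Ioo (0 : ℝ) ε₀, c * ε ≤ g ε ∧ g ε ≤ C * ε) :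
    Tendsto g (𝓝[>] 0) (𝓝[>] 0) := by
  have hsmall : ∀ᶠ ε in 𝓝[>] (0 : ℝ), ε ∈ Set.Ioo 0 ε₀ := Ioo_mem_nhdsGT hε₀
  have hpos : ∀ᶠ ε in 𝓝[>] (0 : ℝ), 0 < g ε := by
    filter_upwards [hsmall] with ε hε
    exact (mul_pos hc hε.1).trans_le (hcomp ε hε).1
  have hupper : Tendsto (fun ε => C * ε) (𝓝[>] (0 : ℝ)) (𝓝 0) := by
    simpa using (tendsto_nhdsWithin_of_tendsto_nhds (tendsto_id (x := 𝓝 (0 : ℝ)))).const_mul C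
  refine tendsto_nhdsWithin_iff.2 ⟨squeeze_zero' (hpos.mono fun _ h => h.le) ?_ hupper, hpos⟩
  filter_upwards [hsmall] with ε hε using (hcomp ε hε).2

theorem stmt12_general (f₁ f₂ e' : ℝ → ℝ)
    (hf₁ : AnalyticAt ℝ f₁ 0) (hf₂ : AnalyticAt ℝ f₂ 0)
    (c C ε₀ : ℝ) (hc : 0 < c) (hε₀ : 0 < ε₀)
    (hcomp : ∀ ε ∈ Set.Ioo (0 : ℝ) ε₀, c * ε ≤ e' ε ∧ e' ε ≤ C * ε)
    (u : ℕ → ℝ) (hu0 : ∀ n, 0 < u n) (hulim : Tendsto u atTop (𝓝 0))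
    (heq : ∀ n, f₁ (u n) - (1 / Real.pi) * Real.log (u n) =
        f₂ (e' (u n)) + (1 / Real.pi) * Real.log (e' (u n))) :
    False := by
  have hu : Tendsto u atTop (𝓝[>] 0) :=
    tendsto_nhdsWithin_iff.2 ⟨hulim, Eventually.of_forall hu0⟩
  have hv : Tendsto (e' ∘ u) atTop (𝓝[>] 0) :=
    (tendsto_nhdsGT_zero_of_comparable hc hε₀ hcomp).comp hu
  have hlog : ∀ n, log (u n) + log (e' (u n)) = π * (f₁ (u n) - f₂ (e' (u n))) := by
    intro n
    have h := heq n
    field_simp at h ⊢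
    linarith
  have hconv : Tendsto (fun n => log (u n) + log (e' (u n))) atTop
      (𝓝 (π * (f₁ 0 - f₂ 0))) := by
    simp only [hlog]
    exact ((hf₁.continuousAt.tendsto.comp hulim).sub
      (hf₂.continuousAt.tendsto.comp (tendsto_nhds_of_tendsto_nhdsWithin hv))).const_mul π
  have hbot : Tendsto (fun n => log (u n) + log (e' (u n))) atTop atBot :=
    (tendsto_log_nhdsGT_zero.comp hu).atBot_add_atBot (tendsto_log_nhdsGT_zero.comp hv)
  exact not_tendsto_atBot_of_tendsto_nhds hconv hbot

/-- Suppose `F₁(ε) = f₁(ε) − (1/π) log ε` and `F₂(ε') = f₂(ε') + (1/π) log ε'` with `f₁`,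
`f₂` real analytic at `0` (i.e. `F₁(ε) + (1/π) log ε` and `F₂(ε') − (1/π) log ε'` are real
analytic, in particular single-valued), `ε'(ε)` is real analytic at `0` and comparable to
`ε`, and `F₁(εₙ) = F₂(ε'(εₙ))` along a positive sequence `εₙ → 0`.  Then a contradiction
follows (`log(ε·ε'(ε))` would be bounded although `ε ε'(ε) → 0`). -/
theorem stmt12 (f₁ f₂ e' : ℝ → ℝ)
    (hf₁ : AnalyticAt ℝ f₁ 0) (hf₂ : AnalyticAt ℝ f₂ 0) (he' : AnalyticAt ℝ e' 0)
    (c C ε₀ : ℝ) (hc : 0 < c) (hC : 0 < C) (hε₀ : 0 < ε₀)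
    (hcomp : ∀ ε ∈ Set.Ioo (0 : ℝ) ε₀, c * ε ≤ e' ε ∧ e' ε ≤ C * ε)
    (u : ℕ → ℝ) (hu0 : ∀ n, 0 < u n) (hulim : Tendsto u atTop (𝓝 0))
    (heq : ∀ n, f₁ (u n) - (1 / Real.pi) * Real.log (u n) =
        f₂ (e' (u n)) + (1 / Real.pi) * Real.log (e' (u n))) :
    False :=
  stmt12_general f₁ f₂ e' hf₁ hf₂ c C ε₀ hc hε₀ hcomp u hu0 hulim heq
end
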